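/- arXiv:math/0101075 — 4 statements merged into one kernel-verified Lean document; each statement's English description precedes it below -/
import Mathlib

section
/- If every graded poset Q of rank n+1 that is r-thick (every nonempty open interval of Q has at least r elements) satisfies ∑_{S⊆[1,n]} a_S r^{n−|S|} f_S(Q) ≥ 0, then every graded poset P of rank n+1 satisfies ∑_{S⊆[1,n]} a_S f_S(P) ≥ 0. -/
open scoped Classical

attribute [local instance] Fintype.ofFinite

/-- A rank function making a bounded poset graded of rank `n+1`. -/
def IsGraded (P : Type) [PartialOrder P] [BoundedOrder P] (ρ : P → ℕ) (n : ℕ) : Prop :=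
  ρ ⊥ = 0 ∧ ρ ⊤ = n + 1 ∧ ∀ x y : P, x ⋖ y → ρ y = ρ x + 1

/-- A poset is `r`-thick if every nonempty open interval has at least `r` elements. -/
def RThick (P : Type) [PartialOrder P] [Fintype P] (r : ℕ) : Prop :=
  ∀ x y : P, x < y → (∃ z, x < z ∧ z < y) →
    r ≤ (Finset.univ.filter fun z => x < z ∧ z < y).card

/-- The flag number `f_S(P)`: the number of chains of `P` whose set of ranks is `S`. -/
noncomputable def flagNum {P : Type} [PartialOrder P] [Fintype P] (ρ : P → ℕ)
    (S : Finset ℕ) : ℕ :=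
  (Finset.univ.filter fun c : Finset P =>
    IsChain (· ≤ ·) (c : Set P) ∧ c.image ρ = S ∧ c.card = S.card).card

/-- The flag number `f_S([x,y])` of the interval `[x,y]`, with ranks relative to `x`. -/
noncomputable def flagNumI {P : Type} [PartialOrder P] [Fintype P] (ρ : P → ℕ)
    (x y : P) (S : Finset ℕ) : ℕ :=
  (Finset.univ.filter fun c : Finset P =>
    IsChain (· ≤ ·) (c : Set P) ∧ (∀ z ∈ c, x < z ∧ z < y) ∧
      c.image (fun z => ρ z - ρ x) = S ∧ c.card = S.card).card

/-- The `k`-Möbius function `μ_k([x,y])`. -/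
noncomputable def muk {P : Type} [PartialOrder P] [Fintype P] (k : ℝ) (x : P) (y : P) : ℝ :=
  if x = y then 1
  else -1 - (1/k) * ∑ z ∈ (Finset.univ.filter fun z => x < z ∧ z < y).attach,
    muk k x z.val
termination_by (Finset.univ.filter fun w => w < y).card
decreasing_by
  have hz : (z : P) < y := (Finset.mem_filter.mp z.2).2.2
  apply Finset.card_lt_card
  rw [Finset.ssubset_iff_of_subset]
  · exact ⟨z, Finset.mem_filter.mpr ⟨Finset.mem_univ _, hz⟩,
      fun hc => absurd (Finset.mem_filter.mp hc).2 (lt_irrefl _)⟩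
  · intro w hw
    exact Finset.mem_filter.mpr ⟨Finset.mem_univ _, (Finset.mem_filter.mp hw).2.trans hz⟩

/-- The ordinary Möbius function of a finite poset. -/
noncomputable def mobius {P : Type} [PartialOrder P] [Fintype P] (x : P) (y : P) : ℤ :=
  if x = y then 1
  else -∑ z ∈ (Finset.univ.filter fun z => x ≤ z ∧ z < y).attach, mobius x z.val
termination_by (Finset.univ.filter fun w => w < y).card
decreasing_by
  have hz : (z : P) < y := (Finset.mem_filter.mp z.2).2.2
  apply Finset.card_lt_card
  rw [Finset.ssubset_iff_of_subset]
  · exact ⟨z, Finset.mem_filter.mpr ⟨Finset.mem_univ _, hz⟩,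
      fun hc => absurd (Finset.mem_filter.mp hc).2 (lt_irrefl _)⟩
  · intro w hw
    exact Finset.mem_filter.mpr ⟨Finset.mem_univ _, (Finset.mem_filter.mp hw).2.trans hz⟩

/-- A graded poset is `k`-Eulerian when `μ_k([x,y]) = (-1)^{ρ(y)-ρ(x)}` on every interval. -/
def IsKEulerian (P : Type) [PartialOrder P] [Fintype P] (ρ : P → ℕ) (k : ℝ) : Prop :=
  ∀ x y : P, x ≤ y → muk k x y = (-1 : ℝ) ^ (ρ y - ρ x)

/-- The flag `L^k` vector of a poset of rank `n+1`. -/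
noncomputable def Lk {P : Type} [PartialOrder P] [Fintype P] (k : ℝ) (n : ℕ) (ρ : P → ℕ)
    (S : Finset ℕ) : ℝ :=
  (-1 : ℝ) ^ (n - S.card) *
    ∑ T ∈ (Finset.Icc 1 n).powerset.filter (fun T => Finset.Icc 1 n \ S ⊆ T),
      (-(1/(2*k))) ^ T.card * (flagNum ρ T : ℝ)

/-- The flag `L^k` vector of an interval `[x,y]` of rank `n+1`. -/
noncomputable def LkI {P : Type} [PartialOrder P] [Fintype P] (k : ℝ) (n : ℕ) (ρ : P → ℕ)
    (x y : P) (S : Finset ℕ) : ℝ :=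
  (-1 : ℝ) ^ (n - S.card) *
    ∑ T ∈ (Finset.Icc 1 n).powerset.filter (fun T => Finset.Icc 1 n \ S ⊆ T),
      (-(1/(2*k))) ^ T.card * (flagNumI ρ x y T : ℝ)

/-- A set is even if it is a disjoint union of intervals of even cardinality. -/
def IsEvenSet (S : Finset ℕ) : Prop :=
  ∃ J : Finset (ℕ × ℕ),
    S = J.biUnion (fun p => Finset.Icc p.1 p.2) ∧
    (∀ p ∈ J, p.1 ≤ p.2 ∧ Even (p.2 + 1 - p.1)) ∧
    (∀ p ∈ J, ∀ q ∈ J, p ≠ q → Disjoint (Finset.Icc p.1 p.2) (Finset.Icc q.1 q.2))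

/-- The horizontal `r`-fold duplication `D^r P`. -/
inductive Dup (P : Type) [PartialOrder P] [BoundedOrder P] (r : ℕ) : Type where
  | bot : Dup P r
  | top : Dup P r
  | mid : {x : P // x ≠ ⊥ ∧ x ≠ ⊤} → Fin r → Dup P r

namespace Dup

variable {P : Type} [PartialOrder P] [BoundedOrder P] {r : ℕ}

def le : Dup P r → Dup P r → Prop
  | .bot, _ => True
  | .mid _ _, .bot => False
  | .mid x i, .mid y j => (x = y ∧ i = j) ∨ (x : P) < (y : P)
  | .mid _ _, .top => True
  | .top, .top => True
  | .top, _ => False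

instance : PartialOrder (Dup P r) where
  le := Dup.le
  le_refl a := by cases a with
    | bot => trivial
    | top => trivial
    | mid x i => exact Or.inl ⟨rfl, rfl⟩
  le_trans a b c hab hbc := by
    cases a with
    | bot => trivial
    | top =>
      cases b with
      | top =>
        cases c with
        | top => trivial
        | bot => exact hbc.elim
        | mid _ _ => exact hbc.elim
      | bot => exact hab.elim
      | mid _ _ => exact hab.elim
    | mid x i =>
      cases b with
      | bot => exact hab.elim
      | top =>
        cases c with
        | top => trivial
        | bot => exact hbc.elim
        | mid _ _ => exact hbc.elim
      | mid y j =>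
        cases c with
        | bot => exact hbc.elim
        | top => trivial
        | mid z l =>
          rcases hab with ⟨rfl, rfl⟩ | h1
          · exact hbc
          · rcases hbc with ⟨rfl, rfl⟩ | h2
            · exact Or.inr h1
            · exact Or.inr (h1.trans h2)
  le_antisymm a b hab hba := by
    cases a with
    | bot =>
      cases b with
      | bot => rfl
      | top => exact hba.elim
      | mid _ _ => exact hba.elim
    | top =>
      cases b with
      | top => rfl
      | bot => exact hab.elim
      | mid _ _ => exact hab.elim
    | mid x i =>
      cases b with
      | bot => exact hab.elim
      | top => exact hba.elim
      | mid y j =>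
        rcases hab with ⟨rfl, rfl⟩ | h1
        · rfl
        · rcases hba with ⟨rfl, rfl⟩ | h2
          · exact absurd h1 (lt_irrefl _)
          · exact absurd (h1.trans h2) (lt_irrefl _)

instance : BoundedOrder (Dup P r) where
  top := .top
  bot := .bot
  le_top a := by cases a <;> trivial
  bot_le a := trivial

instance [Finite P] : Finite (Dup P r) :=
  Finite.of_injective
    (fun a : Dup P r =>
      (match a with
        | .bot => none
        | .top => some none
        | .mid x i => some (some (x, i)) :
        Option (Option ({x : P // x ≠ ⊥ ∧ x ≠ ⊤} × Fin r))))
    (by intro a b h; cases a <;> cases b <;> simp_all)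

/-- The rank function of `D^r P`, where `P` has rank `n+1`. -/
def rank (ρ : P → ℕ) (n : ℕ) : Dup P r → ℕ
  | .bot => 0
  | .top => n + 1
  | .mid x _ => ρ x.val

/-- `a ∈ D^r P` is a copy of `x ∈ P`. -/
def IsCopy (a : Dup P r) (x : P) : Prop :=
  (x = ⊥ ∧ a = .bot) ∨ (x = ⊤ ∧ a = .top) ∨ ∃ h i, a = .mid ⟨x, h⟩ i

end Dup

/-!
Replacing every element of `P` other than `⊥` and `⊤` by `r` pairwise incomparable copies gives
an `r`-thick poset `D^r P`, graded of the same rank through the rank of the original element.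
Projecting copies back to `P` maps the chains of `D^r P` with rank set `S ⊆ [1,n]` onto those of
`P`, and the chains over a fixed chain of `P` are exactly the transversals of the fibres, one copy
of each of its `|S|` elements: hence `f_S(D^r P) = r^|S| f_S(P)`, and the hypothesis applied to
`D^r P` is `r^n` times the desired inequality.
-/

open Finset

theorem card_transversals {α β : Type*} [Fintype α] [DecidableEq α] [DecidableEq β]
    (π : α → β) (d : Finset β) :
    #{c : Finset α | Set.InjOn π c ∧ c.image π = d} = ∏ b ∈ d, #{a | π a = b} := by
  let F : (∀ b : d, {a // π a = b}) → Finset α := fun g => univ.image fun b => (g b).1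
  have hF : Function.Injective F := by
    intro g g' hgg'
    funext b
    have hmem : (g b).1 ∈ F g' := hgg' ▸ mem_image_of_mem (fun b => (g b).1) (mem_univ b)
    obtain ⟨b', -, hb'⟩ := mem_image.1 hmem
    obtain rfl : b' = b := Subtype.ext (by rw [← (g' b').2, ← (g b).2, hb'])
    exact Subtype.ext hb'.symm
  have hrange : ({c : Finset α | Set.InjOn π c ∧ c.image π = d} : Finset _) = univ.image F := by
    ext c
    simp only [mem_filter, mem_univ, true_and, mem_image]
    constructor
    · rintro ⟨hinj, rfl⟩
      have hsec : ∀ b : c.image π, ∃ a ∈ c, π a = b := fun b => mem_image.1 b.2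
      choose g hgc hgπ using hsec
      refine ⟨fun b => ⟨g b, hgπ b⟩, ?_⟩
      ext a
      simp only [F, mem_image, mem_univ, true_and]
      exact ⟨by rintro ⟨b, rfl⟩; exact hgc b,
        fun ha => ⟨⟨π a, mem_image_of_mem π ha⟩, hinj (hgc _) ha (hgπ _)⟩⟩
    · rintro ⟨g, rfl⟩
      refine ⟨?_, ?_⟩
      · intro x hx y hy hxy
        simp only [F, coe_image, coe_univ, Set.image_univ, Set.mem_range] at hx hy
        obtain ⟨b, rfl⟩ := hx
        obtain ⟨b', rfl⟩ := hy
        obtain rfl : b = b' := Subtype.ext (by rw [← (g b).2, ← (g b').2, hxy])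
        rfl
      · simp only [F, image_image, Function.comp_def, (g _).2, univ_eq_attach, attach_image_val]
  rw [hrange, card_image_of_injective _ hF, card_univ, Fintype.card_pi, ← prod_coe_sort d]
  simp only [Fintype.card_subtype]

noncomputable def flags {P : Type} [PartialOrder P] [Fintype P] (ρ : P → ℕ) (S : Finset ℕ) :
    Finset (Finset P) :=
  {c | IsChain (· ≤ ·) (c : Set P) ∧ c.image ρ = S ∧ #c = #S}

lemma card_flags {P : Type} [PartialOrder P] [Fintype P] (ρ : P → ℕ) (S : Finset ℕ) :
    #(flags ρ S) = flagNum ρ S :=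
  rfl

namespace Dup

variable {P : Type} [PartialOrder P] [BoundedOrder P] {r : ℕ}

def base : Dup P r → P
  | .bot => ⊥
  | .top => ⊤
  | .mid x _ => x

lemma lt_mid_iff {a : Dup P r} {x : {x : P // x ≠ ⊥ ∧ x ≠ ⊤}} {i : Fin r} :
    a < mid x i ↔ base a < x := by
  cases a with
  | bot => exact ⟨fun _ => bot_lt_iff_ne_bot.2 x.2.1, fun _ => ⟨trivial, id⟩⟩
  | top => exact ⟨fun h => (h.2 trivial).elim, fun h => (not_top_lt h).elim⟩
  | mid y j =>
    refine ⟨fun ⟨hle, hge⟩ => ?_, fun h => ⟨Or.inr h, ?_⟩⟩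
    · rcases hle with ⟨rfl, rfl⟩ | h
      exacts [(hge (le_refl (mid y j))).elim, h]
    · rintro (⟨rfl, rfl⟩ | h')
      exacts [lt_irrefl _ h, lt_asymm h h']

lemma mid_lt_iff {b : Dup P r} {x : {x : P // x ≠ ⊥ ∧ x ≠ ⊤}} {i : Fin r} :
    mid x i < b ↔ (x : P) < base b := by
  cases b with
  | bot => exact ⟨fun h => h.1.elim, fun h => (not_lt_bot h).elim⟩
  | top => exact ⟨fun _ => lt_top_iff_ne_top.2 x.2.2, fun _ => ⟨trivial, id⟩⟩
  | mid y j => exact lt_mid_iff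

lemma lt_of_base_lt {a b : Dup P r} (h : base a < base b) : a < b := by
  cases b with
  | bot => exact (not_lt_bot h).elim
  | mid y j => exact lt_mid_iff.2 h
  | top =>
    cases a with
    | bot => exact ⟨trivial, id⟩
    | mid x i => exact mid_lt_iff.2 h
    | top => exact (lt_irrefl _ h).elim

lemma base_strictMono (h : (⊥ : P) ≠ ⊤) : StrictMono (base : Dup P r → P) := by
  intro a b hab
  cases b with
  | bot => exact (hab.2 trivial).elim
  | mid y j => exact lt_mid_iff.1 hab
  | top =>
    cases a with
    | bot => exact bot_lt_iff_ne_bot.2 h.symm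
    | mid x i => exact mid_lt_iff.1 hab
    | top => exact (lt_irrefl _ hab).elim

lemma base_mono : Monotone (base : Dup P r → P) := by
  intro a b hab
  rcases hab.eq_or_lt with rfl | hab
  · rfl
  cases b with
  | bot => exact (hab.2 trivial).elim
  | mid y j => exact (lt_mid_iff.1 hab).le
  | top => exact le_top

lemma rank_eq_comp_base {ρ : P → ℕ} {n : ℕ} (h0 : ρ ⊥ = 0) (h1 : ρ ⊤ = n + 1) :
    (rank ρ n : Dup P r → ℕ) = ρ ∘ base := by
  funext a
  cases a with
  | bot => exact h0.symm
  | top => exact h1.symm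
  | mid x i => rfl

lemma base_covBy (hr : 0 < r) (h : (⊥ : P) ≠ ⊤) {a b : Dup P r} (hab : a ⋖ b) :
    base a ⋖ base b :=
  ⟨base_strictMono h hab.1, fun w haw hwb =>
    hab.2 (c := mid ⟨w, ne_bot_of_gt haw, ne_top_of_lt hwb⟩ ⟨0, hr⟩)
      (lt_mid_iff.2 haw) (mid_lt_iff.2 hwb)⟩

lemma card_filter_base_eq [Finite P] {x : P} (hx : x ≠ ⊥ ∧ x ≠ ⊤) :
    #{a : Dup P r | base a = x} = r := by
  have hfib : ({a : Dup P r | base a = x} : Finset _) = univ.image (mid ⟨x, hx⟩) := by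
    ext a
    simp only [mem_filter, mem_univ, true_and, mem_image]
    cases a with
    | bot => exact ⟨fun h => (hx.1 h.symm).elim, fun ⟨_, h⟩ => nomatch h⟩
    | top => exact ⟨fun h => (hx.2 h.symm).elim, fun ⟨_, h⟩ => nomatch h⟩
    | mid y j => exact ⟨fun h => ⟨j, by subst h; rfl⟩, fun ⟨_, h⟩ => by cases h; rfl⟩
  rw [hfib, card_image_of_injective _ fun i j h => by cases h; rfl, card_univ, Fintype.card_fin]

lemma isChain_iff_isChain_image_base {c : Finset (Dup P r)}
    (hc : Set.InjOn base (c : Set (Dup P r))) :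
    IsChain (· ≤ ·) (c : Set (Dup P r)) ↔ IsChain (· ≤ ·) (c.image base : Set P) := by
  rw [coe_image]
  refine ⟨fun h => h.image_of_map_rel _ _ _ fun _ _ => (base_mono ·), fun h a ha b hb hab => ?_⟩
  have hne : base a ≠ base b := fun h' => hab (hc ha hb h')
  rcases h (Set.mem_image_of_mem _ ha) (Set.mem_image_of_mem _ hb) hne with h' | h'
  exacts [Or.inl (lt_of_base_lt (h'.lt_of_ne hne)).le,
    Or.inr (lt_of_base_lt (h'.lt_of_ne hne.symm)).le]

variable {n : ℕ} {ρ : P → ℕ}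

lemma isGraded (hr : 0 < r) (hP : IsGraded P ρ n) : IsGraded (Dup P r) (rank ρ n) n := by
  obtain ⟨h0, h1, hcov⟩ := hP
  have hbt : (⊥ : P) ≠ ⊤ := fun h => by rw [h, h1] at h0; omega
  refine ⟨rfl, rfl, fun a b hab => ?_⟩
  rw [rank_eq_comp_base h0 h1]
  exact hcov _ _ (base_covBy hr hbt hab)

lemma rThick [Finite P] : RThick (Dup P r) r := by
  rintro a b - ⟨z, haz, hzb⟩
  obtain ⟨x, i, rfl⟩ : ∃ x i, z = mid x i := by
    cases z with
    | bot => exact (not_lt_bot haz).elim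
    | top => exact (not_top_lt hzb).elim
    | mid x i => exact ⟨x, i, rfl⟩
  have hcopies : ∀ j, a < mid x j ∧ mid x j < b := fun j =>
    ⟨lt_mid_iff.2 (lt_mid_iff.1 haz), mid_lt_iff.2 (mid_lt_iff.1 hzb)⟩
  calc r = #(univ.image (mid x)) := by
        rw [card_image_of_injective _ fun i j h => by cases h; rfl, card_univ, Fintype.card_fin]
    _ ≤ _ := card_le_card fun w hw => by
        obtain ⟨j, -, rfl⟩ := mem_image.1 hw
        exact mem_filter.2 ⟨mem_univ _, hcopies j⟩

lemma mem_flags_iff [Finite P] (h0 : ρ ⊥ = 0) (h1 : ρ ⊤ = n + 1) {S : Finset ℕ}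
    {c : Finset (Dup P r)} :
    c ∈ flags (rank ρ n) S ↔ Set.InjOn base (c : Set (Dup P r)) ∧ c.image base ∈ flags ρ S := by
  simp only [flags, mem_filter, mem_univ, true_and, rank_eq_comp_base h0 h1, image_image]
  constructor
  · rintro ⟨hchain, himage, hcard⟩
    have hinj : Set.InjOn base (c : Set (Dup P r)) :=
      (card_image_iff.1 (by rw [himage, hcard])).of_comp (g := ρ)
    exact ⟨hinj, (isChain_iff_isChain_image_base hinj).1 hchain, himage,
      by rw [card_image_of_injOn hinj, hcard]⟩
  · rintro ⟨hinj, hchain, himage, hcard⟩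
    exact ⟨(isChain_iff_isChain_image_base hinj).2 hchain, himage,
      by rw [← card_image_of_injOn hinj, hcard]⟩

lemma flagNum_dup [Finite P] (h0 : ρ ⊥ = 0) (h1 : ρ ⊤ = n + 1) {S : Finset ℕ}
    (hS : S ⊆ Icc 1 n) :
    flagNum (rank ρ n : Dup P r → ℕ) S = r ^ #S * flagNum ρ S := by
  have hproper : ∀ d ∈ flags ρ S, ∀ x ∈ d, x ≠ ⊥ ∧ x ≠ ⊤ := by
    intro d hd x hx
    have hρx := mem_Icc.1 (hS ((mem_filter.1 hd).2.2.1 ▸ mem_image_of_mem ρ hx))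
    exact ⟨fun h => by rw [h, h0] at hρx; omega, fun h => by rw [h, h1] at hρx; omega⟩
  rw [← card_flags, ← card_flags,
    card_eq_sum_card_fiberwise fun c hc => ((mem_flags_iff h0 h1).1 hc).2,
    sum_const_nat fun d hd => ?_, mul_comm]
  calc #{c ∈ flags (rank ρ n) S | c.image base = d}
      = #{c : Finset (Dup P r) | Set.InjOn base (c : Set (Dup P r)) ∧ c.image base = d} := by
        congr 1
        ext c
        simp only [mem_filter, mem_univ, true_and, mem_flags_iff h0 h1]
        exact ⟨fun ⟨⟨hinj, _⟩, himage⟩ => ⟨hinj, himage⟩,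
          fun ⟨hinj, himage⟩ => ⟨⟨hinj, himage ▸ hd⟩, himage⟩⟩
    _ = ∏ x ∈ d, r := by
        rw [card_transversals]
        exact prod_congr rfl fun x hx => card_filter_base_eq (hproper d hd x hx)
    _ = r ^ #S := by rw [prod_const, (mem_filter.1 hd).2.2.2]

end Dup

/-- positivity on all `r`-thick posets implies positivity on all graded posets. -/
theorem flag_ineq_of_thick_ineq (n r : ℕ) (hr : 1 ≤ r) (a : Finset ℕ → ℝ)
    (h : ∀ (Q : Type) [PartialOrder Q] [BoundedOrder Q] [Finite Q] (ρQ : Q → ℕ),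
      IsGraded Q ρQ n → RThick Q r →
      0 ≤ ∑ S ∈ (Finset.Icc 1 n).powerset,
            a S * (r : ℝ) ^ (n - S.card) * (flagNum ρQ S : ℝ))
    (P : Type) [PartialOrder P] [BoundedOrder P] [Finite P] (ρ : P → ℕ)
    (hP : IsGraded P ρ n) :
    0 ≤ ∑ S ∈ (Finset.Icc 1 n).powerset, a S * (flagNum ρ S : ℝ) := by
  have hdup := h (Dup P r) (Dup.rank ρ n) (Dup.isGraded hr hP) Dup.rThick
  have hscale : ∑ S ∈ (Icc 1 n).powerset,
      a S * (r : ℝ) ^ (n - #S) * (flagNum (Dup.rank ρ n : Dup P r → ℕ) S : ℝ)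
      = (r : ℝ) ^ n * ∑ S ∈ (Icc 1 n).powerset, a S * (flagNum ρ S : ℝ) := by
    rw [mul_sum]
    refine sum_congr rfl fun S hS => ?_
    have hSn : #S ≤ n := by simpa using card_le_card (mem_powerset.1 hS)
    have hpow : (r : ℝ) ^ n = r ^ (n - #S) * r ^ #S := by rw [← pow_add, Nat.sub_add_cancel hSn]
    rw [Dup.flagNum_dup hP.1 hP.2.1 (mem_powerset.1 hS), hpow]
    push_cast
    ring
  rw [hscale] at hdup
  exact (mul_nonneg_iff_of_pos_left (pow_pos (Nat.cast_pos.2 hr) n)).1 hdup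
end

section
/- For any graded poset P of rank n+1 and real k > 0, the k-Möbius function satisfies μ_k(P) = −∑_{S⊆[1,n]} (−1/k)^{|S|} f_S(P). -/
open scoped Classical

attribute [local instance] Fintype.ofFinite

/-!
Unfolding the recursion, `-μ_k([x,y])` is the chain generating sum
`∑_c (-1/k)^{|c|}` over all chains `c` of the open interval `(x,y)`: removing the top element `z`
of a nonempty chain leaves a chain of `(x,z)`, which is exactly the recursion defining `μ_k`.
In a graded poset the rank function is injective on chains, so grouping the chains of `(0̂,1̂)`
by their rank sets turns this sum into `∑_S (-1/k)^{|S|} f_S(P)`.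
-/

theorem IsChain.exists_isGreatest_of_finset {P : Type*} [PartialOrder P] {c : Finset P}
    (hc : IsChain (· ≤ ·) (c : Set P)) (hne : c.Nonempty) : ∃ m, IsGreatest (c : Set P) m := by
  obtain ⟨m, hm⟩ := Finset.exists_maximal hne
  refine ⟨m, hm.prop, fun b hb => ?_⟩
  rcases hc.total hb hm.prop with hbm | hmb
  · exact hbm
  · exact (hm.eq_of_ge hb hmb).le

theorem IsChain.injOn_of_strictMono {P Q : Type*} [PartialOrder P] [Preorder Q] {f : P → Q}
    (hf : StrictMono f) {s : Set P} (hs : IsChain (· ≤ ·) s) : s.InjOn f := by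
  intro a ha b hb hab
  by_contra hne
  rcases hs ha hb hne with h | h
  · exact (hf (h.lt_of_ne hne)).ne hab
  · exact (hf (h.lt_of_ne' hne)).ne' hab

section Chains

variable {P : Type} [PartialOrder P] [Fintype P]

noncomputable def chainsIoo (x y : P) : Finset (Finset P) :=
  Finset.univ.filter fun c => IsChain (· ≤ ·) (c : Set P) ∧ ∀ z ∈ c, x < z ∧ z < y

noncomputable def chainSum {R : Type*} [CommSemiring R] (t : R) (x y : P) : R :=
  ∑ c ∈ chainsIoo x y, t ^ c.card

theorem mem_chainsIoo {x y : P} {c : Finset P} :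
    c ∈ chainsIoo x y ↔ IsChain (· ≤ ·) (c : Set P) ∧ ∀ z ∈ c, x < z ∧ z < y := by
  simp [chainsIoo]

theorem empty_mem_chainsIoo (x y : P) : ∅ ∈ chainsIoo x y := by
  simp [mem_chainsIoo]

theorem insert_mem_chainsIoo {x y z : P} {c : Finset P} (hc : c ∈ chainsIoo x z)
    (hxz : x < z) (hzy : z < y) : insert z c ∈ chainsIoo x y := by
  obtain ⟨hchain, hmem⟩ := mem_chainsIoo.1 hc
  refine mem_chainsIoo.2 ⟨?_, fun w hw => ?_⟩
  · rw [Finset.coe_insert]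
    exact hchain.insert fun b hb _ => Or.inr (hmem b hb).2.le
  · rcases Finset.mem_insert.1 hw with rfl | hw
    · exact ⟨hxz, hzy⟩
    · exact ⟨(hmem w hw).1, (hmem w hw).2.trans hzy⟩

theorem isGreatest_insert_of_mem_chainsIoo {x z : P} {c : Finset P} (hc : c ∈ chainsIoo x z) :
    IsGreatest (insert z c : Finset P) z := by
  refine ⟨Finset.mem_insert_self z c, fun w hw => ?_⟩
  rcases Finset.mem_insert.1 hw with rfl | hw
  · exact le_rfl
  · exact ((mem_chainsIoo.1 hc).2 w hw).2.le

theorem sum_sigma_chainsIoo_eq_sum_erase {M : Type*} [AddCommMonoid M] (f : Finset P → M)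
    (x y : P) :
    ∑ p ∈ (Finset.univ.filter fun z => x < z ∧ z < y).sigma (chainsIoo x), f (insert p.1 p.2) =
      ∑ c ∈ (chainsIoo x y).erase ∅, f c := by
  refine Finset.sum_nbij (fun p => insert p.1 p.2) ?_ ?_ ?_ fun _ _ => rfl
  · rintro ⟨z, c⟩ hp
    obtain ⟨hz, hc⟩ := Finset.mem_sigma.1 hp
    obtain ⟨-, hxz, hzy⟩ := Finset.mem_filter.1 hz
    exact Finset.mem_erase.2 ⟨Finset.insert_ne_empty z c, insert_mem_chainsIoo hc hxz hzy⟩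
  · rintro ⟨z, c⟩ hp ⟨z', c'⟩ hp' (heq : insert z c = insert z' c')
    obtain ⟨-, hc : c ∈ chainsIoo x z⟩ := Finset.mem_sigma.1 hp
    obtain ⟨-, hc' : c' ∈ chainsIoo x z'⟩ := Finset.mem_sigma.1 hp'
    have hgreatest := isGreatest_insert_of_mem_chainsIoo hc
    rw [heq] at hgreatest
    have hzz' : z = z' := hgreatest.unique (isGreatest_insert_of_mem_chainsIoo hc')
    subst hzz'
    have hz : z ∉ c := fun h => ((mem_chainsIoo.1 hc).2 z h).2.false
    have hz' : z ∉ c' := fun h => ((mem_chainsIoo.1 hc').2 z h).2.false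
    rw [← Finset.erase_insert hz, ← Finset.erase_insert hz', heq]
  · intro c hc
    obtain ⟨hne, hc⟩ := Finset.mem_erase.1 hc
    obtain ⟨hchain, hmem⟩ := mem_chainsIoo.1 hc
    obtain ⟨m, hm, hmax⟩ :=
      hchain.exists_isGreatest_of_finset (Finset.nonempty_iff_ne_empty.2 hne)
    refine ⟨⟨m, c.erase m⟩, Finset.mem_sigma.2 ⟨Finset.mem_filter.2 ⟨Finset.mem_univ m, hmem m hm⟩,
      mem_chainsIoo.2 ⟨hchain.mono (Finset.erase_subset m c), fun w hw => ?_⟩⟩,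
      Finset.insert_erase hm⟩
    obtain ⟨hwm, hw⟩ := Finset.mem_erase.1 hw
    exact ⟨(hmem w hw).1, (hmax hw).lt_of_ne hwm⟩

theorem chainSum_eq_one_add {R : Type*} [CommSemiring R] (t : R) (x y : P) :
    chainSum t x y = 1 + t * ∑ z ∈ Finset.univ.filter (fun z => x < z ∧ z < y), chainSum t x z := by
  have hcard : ∀ p ∈ (Finset.univ.filter fun z => x < z ∧ z < y).sigma (chainsIoo x),
      t ^ (insert p.1 p.2).card = t * t ^ p.2.card := by
    rintro ⟨z, c⟩ hp
    have hz : z ∉ c := fun h => ((mem_chainsIoo.1 (Finset.mem_sigma.1 hp).2).2 z h).2.false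
    rw [Finset.card_insert_of_notMem hz, pow_succ']
  rw [chainSum, ← Finset.add_sum_erase _ _ (empty_mem_chainsIoo x y),
    ← sum_sigma_chainsIoo_eq_sum_erase, Finset.sum_congr rfl hcard, Finset.sum_sigma,
    Finset.mul_sum]
  simp only [chainSum, Finset.mul_sum, Finset.card_empty, pow_zero]

theorem muk_eq_neg_chainSum (k : ℝ) {x y : P} (hxy : x < y) :
    muk k x y = -chainSum (-(1 / k)) x y := by
  induction y using WellFoundedLT.induction with
  | _ y ih =>
    have hbelow : ∀ z ∈ Finset.univ.filter (fun z => x < z ∧ z < y),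
        muk k x z = -chainSum (-(1 / k)) x z := fun z hz =>
      ih z (Finset.mem_filter.1 hz).2.2 (Finset.mem_filter.1 hz).2.1
    rw [muk, if_neg hxy.ne, Finset.sum_attach _ (muk k x), Finset.sum_congr rfl hbelow,
      chainSum_eq_one_add, Finset.sum_neg_distrib]
    ring

end Chains

namespace IsGraded

variable {P : Type} [PartialOrder P] [BoundedOrder P] {ρ : P → ℕ} {n : ℕ}

theorem bot_lt_top (hP : IsGraded P ρ n) : (⊥ : P) < ⊤ :=
  bot_lt_iff_ne_bot.2 fun h => by
    have htop := hP.2.1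
    rw [h, hP.1] at htop
    omega

theorem strictMono [Finite P] (hP : IsGraded P ρ n) : StrictMono ρ := by
  intro x y hxy
  induction y using WellFoundedLT.induction with
  | _ y ih =>
    obtain ⟨w, hxw, hwy⟩ := exists_le_covBy_of_lt hxy
    rw [hP.2.2 w y hwy, Nat.lt_succ_iff]
    rcases hxw.eq_or_lt with rfl | hxw
    · exact le_rfl
    · exact (ih w hwy.lt hxw).le

theorem mem_Ioo_iff_rank_mem_Icc [Finite P] (hP : IsGraded P ρ n) {z : P} :
    (⊥ < z ∧ z < ⊤) ↔ ρ z ∈ Finset.Icc 1 n := by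
  obtain ⟨hbot, htop, -⟩ := id hP
  rw [Finset.mem_Icc, bot_lt_iff_ne_bot, lt_top_iff_ne_top]
  constructor
  · rintro ⟨hz₀, hz₁⟩
    have h₀ := hP.strictMono (bot_lt_iff_ne_bot.2 hz₀)
    have h₁ := hP.strictMono (lt_top_iff_ne_top.2 hz₁)
    omega
  · rintro ⟨h₀, h₁⟩
    exact ⟨fun h => by rw [h, hbot] at h₀; omega, fun h => by rw [h, htop] at h₁; omega⟩

variable [Fintype P]

theorem flagNum_eq_card_filter (hP : IsGraded P ρ n) {S : Finset ℕ} (hS : S ⊆ Finset.Icc 1 n) :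
    flagNum ρ S = ((chainsIoo (⊥ : P) ⊤).filter fun c => c.image ρ = S).card := by
  rw [flagNum]
  congr 1
  ext c
  simp only [Finset.mem_filter, Finset.mem_univ, true_and, mem_chainsIoo]
  constructor
  · rintro ⟨hchain, himage, -⟩
    refine ⟨⟨hchain, fun z hz => hP.mem_Ioo_iff_rank_mem_Icc.2 (hS ?_)⟩, himage⟩
    exact himage ▸ Finset.mem_image_of_mem ρ hz
  · rintro ⟨⟨hchain, -⟩, himage⟩
    exact ⟨hchain, himage, himage ▸ (Finset.card_image_of_injOn
      (hchain.injOn_of_strictMono hP.strictMono)).symm⟩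

theorem chainSum_bot_top {R : Type*} [CommSemiring R] (hP : IsGraded P ρ n) (t : R) :
    chainSum t (⊥ : P) ⊤ =
      ∑ S ∈ (Finset.Icc 1 n).powerset, t ^ S.card * (flagNum ρ S : R) := by
  have hmaps : ∀ c ∈ chainsIoo (⊥ : P) ⊤, c.image ρ ∈ (Finset.Icc 1 n).powerset := by
    intro c hc
    refine Finset.mem_powerset.2 fun r hr => ?_
    obtain ⟨z, hz, rfl⟩ := Finset.mem_image.1 hr
    exact hP.mem_Ioo_iff_rank_mem_Icc.1 ((mem_chainsIoo.1 hc).2 z hz)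
  rw [chainSum, ← Finset.sum_fiberwise_of_maps_to hmaps]
  refine Finset.sum_congr rfl fun S hS => ?_
  have hcard : ∀ c ∈ (chainsIoo (⊥ : P) ⊤).filter fun c => c.image ρ = S,
      t ^ c.card = t ^ S.card := by
    intro c hc
    obtain ⟨hchain, rfl⟩ := Finset.mem_filter.1 hc
    rw [Finset.card_image_of_injOn ((mem_chainsIoo.1 hchain).1.injOn_of_strictMono hP.strictMono)]
  rw [Finset.sum_congr rfl hcard, Finset.sum_const, hP.flagNum_eq_card_filter
    (Finset.mem_powerset.1 hS), nsmul_eq_mul, mul_comm]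

end IsGraded

theorem muk_eq_neg_sum_general {P : Type} [PartialOrder P] [BoundedOrder P] [Finite P]
    (n : ℕ) (ρ : P → ℕ) (hP : IsGraded P ρ n) (k : ℝ) :
    muk k (⊥ : P) ⊤ =
      -∑ S ∈ (Finset.Icc 1 n).powerset, (-(1/k)) ^ S.card * (flagNum ρ S : ℝ) := by
  rw [muk_eq_neg_chainSum k hP.bot_lt_top, hP.chainSum_bot_top]

/-- `μ_k(P) = -∑_{S ⊆ [1,n]} (-1/k)^{|S|} f_S(P)`. -/
theorem muk_eq_neg_sum {P : Type} [PartialOrder P] [BoundedOrder P] [Finite P]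
    (n : ℕ) (ρ : P → ℕ) (hP : IsGraded P ρ n) (k : ℝ) (hk : 0 < k) :
    muk k (⊥ : P) ⊤ =
      -∑ S ∈ (Finset.Icc 1 n).powerset, (-(1/k)) ^ S.card * (flagNum ρ S : ℝ) :=
  muk_eq_neg_sum_general n ρ hP k
end

section
/- Every interval of a k-Eulerian poset is k-Eulerian, and a k-Eulerian poset P of rank n+1 satisfies ∑_{i=1}^{n} (−1)^{i−1} f_i(P) = k(1 − (−1)^n), where f_i(P) is the number of elements of P of rank i. -/
open scoped Classical

attribute [local instance] Fintype.ofFinite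

/-!
`μ_k([x,y])` is computed from the elements strictly between `x` and `y` only, so it is the same
in `P` and in any order-convex subset containing `x` and `y`, such as an interval `[a,b]`; this
gives the first claim. For the second, unfold the recursion for `μ_k([⊥,⊤]) = (-1)^(n+1)`: the
elements `⊥ < z < ⊤` are those of rank `1, …, n`, and `μ_k([⊥,z]) = (-1)^ρ(z)`, so the sum in the
recursion is `∑ i, (-1)^i f_i(P)`, which is therefore `k((-1)^n - 1)`.
-/

section Muk

variable {P : Type} [PartialOrder P] [Fintype P]

lemma muk_self (k : ℝ) (x : P) : muk k x x = 1 := by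
  rw [muk, if_pos rfl]

lemma muk_of_ne (k : ℝ) {x y : P} (h : x ≠ y) :
    muk k x y = -1 - (1 / k) * ∑ z ∈ Finset.univ.filter (fun z => x < z ∧ z < y), muk k x z := by
  rw [muk, if_neg h, Finset.sum_attach _ (muk k x)]

lemma muk_subtype {s : Set P} [Fintype s] (hs : s.OrdConnected) (k : ℝ) (x y : s) :
    muk k x y = muk k (x : P) y := by
  induction y using WellFoundedLT.induction with
  | _ y ih =>
    by_cases h : x = y
    · subst h
      rw [muk_self, muk_self]
    rw [muk_of_ne k h, muk_of_ne k (Subtype.coe_injective.ne h)]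
    congr 2
    refine Finset.sum_bij (fun z _ => (z : P)) ?_ (fun _ _ _ _ => Subtype.ext) ?_ ?_
    · intro z hz
      simpa using hz
    · intro w hw
      simp only [Finset.mem_filter, Finset.mem_univ, true_and] at hw
      exact ⟨⟨w, hs.out x.2 y.2 ⟨hw.1.le, hw.2.le⟩⟩, by simpa [← Subtype.coe_lt_coe] using hw, rfl⟩
    · intro z hz
      simp only [Finset.mem_filter, Finset.mem_univ, true_and] at hz
      exact ih z hz.2

lemma IsKEulerian.Icc {ρ : P → ℕ} {k : ℝ} (hE : IsKEulerian P ρ k) (hρ : Monotone ρ) (a b : P)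
    [Fintype (Set.Icc a b)] : IsKEulerian (Set.Icc a b) (fun z => ρ z.val - ρ a) k := by
  intro x y hxy
  have hax : ρ a ≤ ρ x := hρ x.2.1
  have hρxy : ρ x ≤ ρ y := hρ hxy
  rw [muk_subtype Set.ordConnected_Icc, hE x y hxy]
  congr 1
  dsimp only
  omega

lemma flagNum_singleton (ρ : P → ℕ) (i : ℕ) :
    flagNum ρ {i} = (Finset.univ.filter fun z : P => ρ z = i).card := by
  symm
  refine Finset.card_bij (fun z _ => {z}) ?_ (fun _ _ _ _ h => Finset.singleton_injective h) ?_
  · intro z hz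
    simp only [Finset.mem_filter, Finset.mem_univ, true_and] at hz ⊢
    simp [hz]
  · intro c hc
    simp only [Finset.mem_filter, Finset.mem_univ, true_and, Finset.card_singleton] at hc
    obtain ⟨z, rfl⟩ := Finset.card_eq_one.mp hc.2.2
    refine ⟨z, ?_, rfl⟩
    simpa using hc.2.1

end Muk

section Graded

variable {P : Type} [PartialOrder P] [BoundedOrder P] [Finite P] {ρ : P → ℕ} {n : ℕ}

lemma IsGraded.strictMono_s5 (hP : IsGraded P ρ n) : StrictMono ρ := by
  have := Fintype.ofFinite P
  let := Fintype.toLocallyFiniteOrder (α := P)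
  refine (strictMono_iff_forall_covBy ρ).2 fun x y hxy => ?_
  rw [hP.2.2 x y hxy]
  exact Nat.lt_succ_self _

lemma IsGraded.bot_lt_and_lt_top_iff (hP : IsGraded P ρ n) {z : P} :
    ⊥ < z ∧ z < ⊤ ↔ ρ z ∈ Finset.Icc 1 n := by
  have hρ := hP.strictMono_s5
  obtain ⟨hbot, htop, -⟩ := hP
  rw [Finset.mem_Icc]
  constructor
  · rintro ⟨hz₁, hz₂⟩
    have := hρ hz₁
    have := hρ hz₂
    omega
  · rintro ⟨hz₁, hz₂⟩
    refine ⟨bot_lt_iff_ne_bot.2 ?_, lt_top_iff_ne_top.2 ?_⟩ <;> rintro rfl <;> omega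

lemma IsGraded.sum_Ioo_bot_top (hP : IsGraded P ρ n) (f : ℕ → ℝ) :
    ∑ z ∈ Finset.univ.filter (fun z : P => ⊥ < z ∧ z < ⊤), f (ρ z)
      = ∑ i ∈ Finset.Icc 1 n, (flagNum ρ {i} : ℝ) * f i := by
  rw [Finset.filter_congr fun z _ => hP.bot_lt_and_lt_top_iff,
    ← Finset.sum_fiberwise_eq_sum_filter']
  refine Finset.sum_congr rfl fun i _ => ?_
  rw [Finset.sum_const, flagNum_singleton, nsmul_eq_mul]

lemma IsKEulerian.alternating_sum_flagNum {k : ℝ} (hP : IsGraded P ρ n)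
    (hE : IsKEulerian P ρ k) (hk : k ≠ 0) :
    ∑ i ∈ Finset.Icc 1 n, (-1 : ℝ) ^ (i - 1) * (flagNum ρ {i} : ℝ) = k * (1 - (-1 : ℝ) ^ n) := by
  have hbt : (⊥ : P) ≠ ⊤ := fun h => by
    have := hP.1
    rw [h, hP.2.1] at this
    omega
  have hμ := hE ⊥ ⊤ bot_le
  rw [muk_of_ne k hbt, hP.1, hP.2.1, Nat.sub_zero] at hμ
  have hsum : ∑ z ∈ Finset.univ.filter (fun z : P => ⊥ < z ∧ z < ⊤), muk k ⊥ z
      = ∑ i ∈ Finset.Icc 1 n, (flagNum ρ {i} : ℝ) * (-1) ^ i := by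
    rw [← hP.sum_Ioo_bot_top]
    refine Finset.sum_congr rfl fun z _ => ?_
    rw [hE ⊥ z bot_le, hP.1, Nat.sub_zero]
  have hsign : ∑ i ∈ Finset.Icc 1 n, (-1 : ℝ) ^ (i - 1) * (flagNum ρ {i} : ℝ)
      = -∑ i ∈ Finset.Icc 1 n, (flagNum ρ {i} : ℝ) * (-1) ^ i := by
    rw [← Finset.sum_neg_distrib]
    refine Finset.sum_congr rfl fun i hi => ?_
    obtain ⟨j, rfl⟩ := Nat.exists_eq_add_of_le' (Finset.mem_Icc.1 hi).1
    rw [Nat.add_sub_cancel, pow_succ]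
    ring
  rw [hsign, ← hsum]
  field_simp at hμ
  linear_combination hμ

end Graded

/-- intervals of a `k`-Eulerian poset are `k`-Eulerian, and the
alternating sum of the rank numbers is `k(1-(-1)^n)`. -/
theorem isKEulerian_intervals_and_euler {P : Type} [PartialOrder P] [BoundedOrder P] [Finite P]
    (n : ℕ) (ρ : P → ℕ) (k : ℝ) (hk : 0 < k) (hP : IsGraded P ρ n)
    (hE : IsKEulerian P ρ k) :
    (∀ a b : P, a ≤ b →
        IsKEulerian (Set.Icc a b) (fun z => ρ z.val - ρ a) k) ∧
    ∑ i ∈ Finset.Icc 1 n, (-1 : ℝ) ^ (i - 1) * (flagNum ρ {i} : ℝ)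
      = k * (1 - (-1 : ℝ) ^ n) :=
  ⟨fun a b _ => hE.Icc hP.strictMono_s5.monotone a b, hE.alternating_sum_flagNum hP hk.ne'⟩
end

section
/- Let P be a graded poset of rank n+1 with order relation ≺_P. Form Q = {0̂,1̂} ∪ {x_1, x_2 : x ∈ P\{0̂,1̂}} with u ≺_Q v iff u = 0̂ and v ≠ 0̂, or v = 1̂ and u ≠ 1̂, or u = x_1, v = x_2 for some x, or u = x_i, v = y_j with x ≺_P y. Then Q is a half-Eulerian graded poset of rank 2n+1. -/
open scoped Classical

attribute [local instance] Fintype.ofFinite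

/-- The vertical doubling `Q` of a graded poset `P`. -/
inductive VDup (P : Type) [PartialOrder P] [BoundedOrder P] : Type where
  | bot : VDup P
  | top : VDup P
  | mid : {x : P // x ≠ ⊥ ∧ x ≠ ⊤} → Fin 2 → VDup P

namespace VDup

variable {P : Type} [PartialOrder P] [BoundedOrder P]

def le : VDup P → VDup P → Prop
  | .bot, _ => True
  | .mid _ _, .bot => False
  | .mid x i, .mid y j => (x = y ∧ i ≤ j) ∨ (x : P) < (y : P)
  | .mid _ _, .top => True
  | .top, .top => True
  | .top, _ => False

instance : PartialOrder (VDup P) where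
  le := VDup.le
  le_refl a := by cases a with
    | bot => trivial
    | top => trivial
    | mid x i => exact Or.inl ⟨rfl, le_refl _⟩
  le_trans a b c hab hbc := by
    cases a with
    | bot => trivial
    | top =>
      cases b with
      | top =>
        cases c with
        | top => trivial
        | bot => exact hbc.elim
        | mid _ _ => exact hbc.elim
      | bot => exact hab.elim
      | mid _ _ => exact hab.elim
    | mid x i =>
      cases b with
      | bot => exact hab.elim
      | top =>
        cases c with
        | top => trivial
        | bot => exact hbc.elim
        | mid _ _ => exact hbc.elim
      | mid y j =>
        cases c with
        | bot => exact hbc.elim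
        | top => trivial
        | mid z l =>
          rcases hab with ⟨rfl, h1⟩ | h1
          · rcases hbc with ⟨rfl, h2⟩ | h2
            · exact Or.inl ⟨rfl, h1.trans h2⟩
            · exact Or.inr h2
          · rcases hbc with ⟨rfl, h2⟩ | h2
            · exact Or.inr h1
            · exact Or.inr (h1.trans h2)
  le_antisymm a b hab hba := by
    cases a with
    | bot =>
      cases b with
      | bot => rfl
      | top => exact hba.elim
      | mid _ _ => exact hba.elim
    | top =>
      cases b with
      | top => rfl
      | bot => exact hab.elim
      | mid _ _ => exact hab.elim
    | mid x i =>
      cases b with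
      | bot => exact hab.elim
      | top => exact hba.elim
      | mid y j =>
        rcases hab with ⟨rfl, h1⟩ | h1
        · rcases hba with ⟨-, h2⟩ | h2
          · exact congrArg _ (le_antisymm h1 h2)
          · exact absurd h2 (lt_irrefl _)
        · rcases hba with ⟨rfl, h2⟩ | h2
          · exact absurd h1 (lt_irrefl _)
          · exact absurd (h1.trans h2) (lt_irrefl _)

instance : BoundedOrder (VDup P) where
  top := .top
  bot := .bot
  le_top a := by cases a <;> trivial
  bot_le a := trivial

instance [Finite P] : Finite (VDup P) :=
  Finite.of_injective
    (fun a : VDup P =>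
      (match a with
        | .bot => none
        | .top => some none
        | .mid x i => some (some (x, i)) :
        Option (Option ({x : P // x ≠ ⊥ ∧ x ≠ ⊤} × Fin 2))))
    (by intro a b h; cases a <;> cases b <;> simp_all)

/-- The rank function of the vertical doubling of a rank `n+1` poset. -/
def rank (ρ : P → ℕ) (n : ℕ) : VDup P → ℕ
  | .bot => 0
  | .top => 2 * n + 1
  | .mid x i => 2 * ρ x.val - 1 + i.val

end VDup
section Aux

variable {P : Type} [PartialOrder P] [BoundedOrder P] [Finite P]

-- P-side order lemmas
lemma exists_le_cov {a b : P} (h : a < b) : ∃ c, a ≤ c ∧ c ⋖ b := by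
  obtain ⟨m, hm, hmax⟩ : ∃ m ∈ Finset.univ.filter (fun c => a ≤ c ∧ c < b),
      ∀ x ∈ Finset.univ.filter (fun c => a ≤ c ∧ c < b), ¬ m < x := by
    obtain ⟨m, hm⟩ := Finset.exists_maximal
      (s := Finset.univ.filter fun c => a ≤ c ∧ c < b) ⟨a, by simp [h]⟩
    exact ⟨m, hm.1, fun x hx hlt => hlt.not_ge (hm.2 hx hlt.le)⟩
  simp only [Finset.mem_filter, Finset.mem_univ, true_and] at hm hmax
  refine ⟨m, hm.1, hm.2, fun z hz hz' => ?_⟩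
  exact hmax z ⟨hm.1.trans hz.le, hz'⟩ hz

lemma exists_cov_le {a b : P} (h : a < b) : ∃ c, a ⋖ c ∧ c ≤ b := by
  obtain ⟨m, hm, hmin⟩ : ∃ m ∈ Finset.univ.filter (fun c => a < c ∧ c ≤ b),
      ∀ x ∈ Finset.univ.filter (fun c => a < c ∧ c ≤ b), ¬ x < m := by
    obtain ⟨m, hm⟩ := Finset.exists_minimal
      (s := Finset.univ.filter fun c => a < c ∧ c ≤ b) ⟨b, by simp [h]⟩
    exact ⟨m, hm.1, fun x hx hlt => hlt.not_ge (hm.2 hx hlt.le)⟩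
  simp only [Finset.mem_filter, Finset.mem_univ, true_and] at hm hmin
  refine ⟨m, ⟨hm.1, fun z hz hz' => ?_⟩, hm.2⟩
  exact hmin z ⟨hz, hz'.le.trans hm.2⟩ hz'

variable {n : ℕ} {ρ : P → ℕ}

lemma rho_lt (hP : IsGraded P ρ n) : ∀ b a : P, a < b → ρ a < ρ b := by
  intro b
  induction b using WellFoundedLT.induction with
  | _ b ih =>
    intro a hab
    obtain ⟨c, hac, hcb⟩ := exists_le_cov hab
    have hρ := hP.2.2 c b hcb
    rcases eq_or_lt_of_le hac with rfl | h
    · omega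
    · have := ih c hcb.lt a h
      omega

end Aux

set_option linter.unusedSectionVars false

namespace VDup

variable {P : Type} [PartialOrder P] [BoundedOrder P]

local notation "I" => {x : P // x ≠ ⊥ ∧ x ≠ ⊤}

lemma bot_eq : (⊥ : VDup P) = .bot := rfl
lemma top_eq : (⊤ : VDup P) = .top := rfl

lemma mid_le_mid_iff {x y : I} {i j : Fin 2} :
    (VDup.mid x i : VDup P) ≤ .mid y j ↔ (x = y ∧ i ≤ j) ∨ (x : P) < (y : P) := Iff.rfl

lemma not_lt_bot (a : VDup P) : ¬ a < .bot := by
  intro h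
  have := h.le
  cases a with
  | bot => exact absurd rfl h.ne
  | top => exact this
  | mid x i => exact this

lemma not_top_lt (a : VDup P) : ¬ .top < a := by
  intro h
  have := h.le
  cases a with
  | top => exact absurd rfl h.ne
  | bot => exact this
  | mid x i => exact this

lemma bot_lt_mid (x : I) (i : Fin 2) : (VDup.bot : VDup P) < .mid x i :=
  lt_of_le_of_ne trivial (by simp)

lemma mid_lt_top (x : I) (i : Fin 2) : (VDup.mid x i : VDup P) < .top :=
  lt_of_le_of_ne trivial (by simp)

lemma bot_lt_top' [Finite P] : (VDup.bot : VDup P) < .top :=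
  lt_of_le_of_ne trivial (by simp)

lemma mid_lt_mid_iff {x y : I} {i j : Fin 2} :
    (VDup.mid x i : VDup P) < .mid y j ↔ (x = y ∧ i < j) ∨ (x : P) < (y : P) := by
  rw [lt_iff_le_and_ne, mid_le_mid_iff]
  constructor
  · rintro ⟨⟨rfl, hij⟩ | h, hne⟩
    · refine Or.inl ⟨rfl, lt_of_le_of_ne hij fun h => hne (by rw [h])⟩
    · exact Or.inr h
  · rintro (⟨rfl, hij⟩ | h)
    · exact ⟨Or.inl ⟨rfl, hij.le⟩, by simp [hij.ne]⟩
    · refine ⟨Or.inr h, ?_⟩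
      intro hc
      rw [VDup.mid.injEq] at hc
      exact absurd h (by rw [hc.1]; exact lt_irrefl _)

lemma lt_mid_one_iff {x : VDup P} {c : I} :
    x < .mid c 1 ↔ x ≤ .mid c 0 := by
  constructor
  · intro h
    cases x with
    | bot => trivial
    | top => exact absurd h (not_top_lt _)
    | mid a i =>
      rcases mid_lt_mid_iff.mp h with ⟨rfl, hij⟩ | h
      · have : i = 0 := by omega
        exact this ▸ le_refl _
      · exact Or.inr h
  · intro h
    exact lt_of_le_of_lt h (mid_lt_mid_iff.mpr (Or.inl ⟨rfl, by omega⟩))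

lemma mid_zero_lt_iff {y : VDup P} {c : I} :
    (VDup.mid c 0 : VDup P) < y ↔ (VDup.mid c 1 : VDup P) ≤ y := by
  constructor
  · intro h
    cases y with
    | bot => exact absurd h (not_lt_bot _)
    | top => trivial
    | mid b j =>
      rcases mid_lt_mid_iff.mp h with ⟨rfl, hij⟩ | h
      · have : j = 1 := by omega
        exact this ▸ le_refl _
      · exact Or.inr h
  · intro h
    exact lt_of_lt_of_le (mid_lt_mid_iff.mpr (Or.inl ⟨rfl, by omega⟩)) h

end VDup

namespace VDup

variable {P : Type} [PartialOrder P] [BoundedOrder P] [Finite P]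

local notation "I" => {x : P // x ≠ ⊥ ∧ x ≠ ⊤}

variable {n : ℕ} {ρ : P → ℕ}

lemma interior_rho (hP : IsGraded P ρ n) (x : I) :
    1 ≤ ρ (x : P) ∧ ρ (x : P) ≤ n := by
  have h1 : (⊥ : P) < x := lt_of_le_of_ne bot_le (Ne.symm x.2.1)
  have h2 : (x : P) < ⊤ := lt_of_le_of_ne le_top x.2.2
  have := rho_lt hP _ _ h1
  have := rho_lt hP _ _ h2
  have := hP.1
  have := hP.2.1
  omega

lemma rank_mid (hP : IsGraded P ρ n) (x : I) (i : Fin 2) :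
    VDup.rank ρ n (.mid x i) = 2 * (ρ (x : P) - 1) + 1 + i.val := by
  have := interior_rho hP x
  show 2 * ρ (x : P) - 1 + i.val = _
  omega

lemma eps_mid (hP : IsGraded P ρ n) (x : I) (i : Fin 2) :
    (-1 : ℝ) ^ (VDup.rank ρ n (.mid x i)) = -(-1 : ℝ) ^ i.val := by
  rw [rank_mid hP, pow_add, pow_add, pow_mul]
  norm_num

lemma eps_mid_zero (hP : IsGraded P ρ n) (x : I) :
    (-1 : ℝ) ^ (VDup.rank ρ n (.mid x 0)) = -1 := by
  rw [eps_mid hP]; norm_num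

lemma eps_mid_one (hP : IsGraded P ρ n) (x : I) :
    (-1 : ℝ) ^ (VDup.rank ρ n (.mid x 1)) = 1 := by
  rw [eps_mid hP]; norm_num

lemma eps_top : (-1 : ℝ) ^ (VDup.rank ρ n (.top : VDup P)) = -1 := by
  show (-1 : ℝ) ^ (2 * n + 1) = -1
  rw [pow_add, pow_mul]; norm_num

lemma rank_strictMono (hP : IsGraded P ρ n) {a b : VDup P} (h : a < b) :
    VDup.rank ρ n a < VDup.rank ρ n b := by
  cases a with
  | top => exact absurd h (not_top_lt _)
  | bot =>
    cases b with
    | bot => exact absurd h (lt_irrefl _)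
    | top => show 0 < 2 * n + 1; omega
    | mid x i =>
      have := interior_rho hP x
      show 0 < 2 * ρ (x : P) - 1 + i.val
      omega
  | mid x i =>
    cases b with
    | bot => exact absurd h (not_lt_bot _)
    | top =>
      have := interior_rho hP x
      show 2 * ρ (x : P) - 1 + i.val < 2 * n + 1
      have : i.val ≤ 1 := by omega
      omega
    | mid y j =>
      have hx := interior_rho hP x
      have hy := interior_rho hP y
      show 2 * ρ (x : P) - 1 + i.val < 2 * ρ (y : P) - 1 + j.val
      rcases mid_lt_mid_iff.mp h with ⟨rfl, hij⟩ | hlt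
      · have : i.val < j.val := hij
        omega
      · have := rho_lt hP _ _ hlt
        have : i.val ≤ 1 := by omega
        have : j.val ≤ 1 := by omega
        omega

end VDup

lemma neg_one_pow_sub' {a b : ℕ} (h : b ≤ a) :
    (-1 : ℝ) ^ (a - b) = (-1) ^ a * (-1) ^ b := by
  have h1 : (-1 : ℝ) ^ (a - b) * (-1) ^ b = (-1) ^ a := by
    rw [← pow_add]; congr 1; omega
  have h2 : ((-1 : ℝ) ^ b) * ((-1) ^ b) = 1 := by
    rw [← pow_add, ← two_mul, pow_mul]; norm_num
  calc (-1 : ℝ) ^ (a - b) = (-1 : ℝ) ^ (a - b) * (((-1) ^ b) * ((-1) ^ b)) := by rw [h2, mul_one]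
    _ = ((-1 : ℝ) ^ (a - b) * (-1) ^ b) * (-1) ^ b := by ring
    _ = (-1) ^ a * (-1) ^ b := by rw [h1]

lemma sum_false {α : Type} [Fintype α] (v : ℝ) (Q : α → Prop) (h : ∀ c, ¬ Q c) :
    (∑ c : α, if Q c then v else 0) = 0 := by
  rw [Finset.sum_eq_zero]
  intro c _
  simp [h c]

lemma sum_pin {α : Type} [Fintype α] (b : α) (Q : α → Prop) (v : ℝ) :
    (∑ c : α, if c = b ∧ Q c then v else 0) = if Q b then v else 0 := by
  rw [Finset.sum_eq_single b]
  · simp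
  · intro c _ hc
    simp [hc]
  · simp

lemma sum_pin' {α : Type} [Fintype α] (b : α) (Q : α → Prop) (v : ℝ) :
    (∑ c : α, if b = c ∧ Q c then v else 0) = if Q b then v else 0 := by
  rw [← sum_pin b Q v]
  apply Finset.sum_congr rfl
  intro c _
  congr 1
  simp [eq_comm]

namespace VDup

variable {P : Type} [PartialOrder P] [BoundedOrder P] [Finite P]

local notation "I" => {x : P // x ≠ ⊥ ∧ x ≠ ⊤}

variable {n : ℕ} {ρ : P → ℕ}

lemma sumAB (hP : IsGraded P ρ n) {x y : VDup P} (hxy : x < y) :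
    ((∑ c : I, if (VDup.mid c 1 : VDup P) = y ∧ x < .mid c 0 then (-1 : ℝ) else 0) +
      ∑ c : I, if x = (VDup.mid c 0 : VDup P) ∧ (VDup.mid c 1 : VDup P) < y then (1 : ℝ) else 0) =
    (-(-1 : ℝ) ^ (VDup.rank ρ n x) - (-1 : ℝ) ^ (VDup.rank ρ n y)) / 2 := by
  cases x with
  | top => exact absurd hxy (not_top_lt _)
  | bot =>
    cases y with
    | bot => exact absurd hxy (lt_irrefl _)
    | top =>
      have e1 : (∑ c : I, if (VDup.mid c 1 : VDup P) = .top ∧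
          (VDup.bot : VDup P) < .mid c 0 then (-1 : ℝ) else 0) = 0 :=
        Finset.sum_eq_zero fun c _ => by rw [if_neg]; simp
      have e2 : (∑ c : I, if (VDup.bot : VDup P) = .mid c 0 ∧
          (VDup.mid c 1 : VDup P) < .top then (1 : ℝ) else 0) = 0 :=
        Finset.sum_eq_zero fun c _ => by rw [if_neg]; simp
      rw [e1, e2, eps_top, show VDup.rank ρ n (.bot : VDup P) = 0 from rfl]
      norm_num
    | mid b j =>
      have hj : j = 0 ∨ j = 1 := by omega
      rcases hj with rfl | rfl
      · have e1 : (∑ c : I, if (VDup.mid c 1 : VDup P) = .mid b 0 ∧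
            (VDup.bot : VDup P) < .mid c 0 then (-1 : ℝ) else 0) = 0 :=
          Finset.sum_eq_zero fun c _ => by
            rw [if_neg]; rintro ⟨h, -⟩; rw [VDup.mid.injEq] at h; exact absurd h.2 (by decide)
        have e2 : (∑ c : I, if (VDup.bot : VDup P) = .mid c 0 ∧
            (VDup.mid c 1 : VDup P) < .mid b 0 then (1 : ℝ) else 0) = 0 :=
          Finset.sum_eq_zero fun c _ => by rw [if_neg]; simp
        rw [e1, e2, eps_mid_zero hP, show VDup.rank ρ n (.bot : VDup P) = 0 from rfl]
        norm_num
      · have e1 : (∑ c : I, if (VDup.mid c 1 : VDup P) = .mid b 1 ∧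
            (VDup.bot : VDup P) < .mid c 0 then (-1 : ℝ) else 0) = -1 := by
          rw [Finset.sum_eq_single b]
          · rw [if_pos ⟨rfl, bot_lt_mid _ _⟩]
          · intro c _ hc
            rw [if_neg]
            rintro ⟨h, -⟩
            rw [VDup.mid.injEq] at h
            exact hc h.1
          · simp
        have e2 : (∑ c : I, if (VDup.bot : VDup P) = .mid c 0 ∧
            (VDup.mid c 1 : VDup P) < .mid b 1 then (1 : ℝ) else 0) = 0 :=
          Finset.sum_eq_zero fun c _ => by rw [if_neg]; simp
        rw [e1, e2, eps_mid_one hP, show VDup.rank ρ n (.bot : VDup P) = 0 from rfl]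
        norm_num
  | mid a i =>
    cases y with
    | bot => exact absurd hxy (not_lt_bot _)
    | top =>
      have hi : i = 0 ∨ i = 1 := by omega
      rcases hi with rfl | rfl
      · have e1 : (∑ c : I, if (VDup.mid c 1 : VDup P) = .top ∧
            (VDup.mid a 0 : VDup P) < .mid c 0 then (-1 : ℝ) else 0) = 0 :=
          Finset.sum_eq_zero fun c _ => by rw [if_neg]; simp
        have e2 : (∑ c : I, if (VDup.mid a 0 : VDup P) = .mid c 0 ∧
            (VDup.mid c 1 : VDup P) < .top then (1 : ℝ) else 0) = 1 := by
          rw [Finset.sum_eq_single a]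
          · rw [if_pos ⟨rfl, mid_lt_top _ _⟩]
          · intro c _ hc
            rw [if_neg]
            rintro ⟨h, -⟩
            rw [VDup.mid.injEq] at h
            exact hc h.1.symm
          · simp
        rw [e1, e2, eps_mid_zero hP, eps_top]
        norm_num
      · have e1 : (∑ c : I, if (VDup.mid c 1 : VDup P) = .top ∧
            (VDup.mid a 1 : VDup P) < .mid c 0 then (-1 : ℝ) else 0) = 0 :=
          Finset.sum_eq_zero fun c _ => by rw [if_neg]; simp
        have e2 : (∑ c : I, if (VDup.mid a 1 : VDup P) = .mid c 0 ∧
            (VDup.mid c 1 : VDup P) < .top then (1 : ℝ) else 0) = 0 :=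
          Finset.sum_eq_zero fun c _ => by
            rw [if_neg]; rintro ⟨h, -⟩; rw [VDup.mid.injEq] at h; exact absurd h.2 (by decide)
        rw [e1, e2, eps_mid_one hP, eps_top]
        norm_num
    | mid b j =>
      have hab : (a = b ∧ i < j) ∨ (a : P) < (b : P) := mid_lt_mid_iff.mp hxy
      have hi : i = 0 ∨ i = 1 := by omega
      have hj : j = 0 ∨ j = 1 := by omega
      rcases hi with rfl | rfl <;> rcases hj with rfl | rfl
      · -- i = 0, j = 0
        have hlt : (a : P) < (b : P) := by
          rcases hab with ⟨-, h⟩ | h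
          · exact absurd h (by omega)
          · exact h
        have e1 : (∑ c : I, if (VDup.mid c 1 : VDup P) = .mid b 0 ∧
            (VDup.mid a 0 : VDup P) < .mid c 0 then (-1 : ℝ) else 0) = 0 :=
          Finset.sum_eq_zero fun c _ => by
            rw [if_neg]; rintro ⟨h, -⟩; rw [VDup.mid.injEq] at h; exact absurd h.2 (by decide)
        have e2 : (∑ c : I, if (VDup.mid a 0 : VDup P) = .mid c 0 ∧
            (VDup.mid c 1 : VDup P) < .mid b 0 then (1 : ℝ) else 0) = 1 := by
          rw [Finset.sum_eq_single a]
          · rw [if_pos ⟨rfl, mid_lt_mid_iff.mpr (Or.inr hlt)⟩]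
          · intro c _ hc
            rw [if_neg]
            rintro ⟨h, -⟩
            rw [VDup.mid.injEq] at h
            exact hc h.1.symm
          · simp
        rw [e1, e2, eps_mid_zero hP, eps_mid_zero hP]
        norm_num
      · -- i = 0, j = 1
        by_cases hlt : (a : P) < (b : P)
        · have e1 : (∑ c : I, if (VDup.mid c 1 : VDup P) = .mid b 1 ∧
              (VDup.mid a 0 : VDup P) < .mid c 0 then (-1 : ℝ) else 0) = -1 := by
            rw [Finset.sum_eq_single b]
            · rw [if_pos ⟨rfl, mid_lt_mid_iff.mpr (Or.inr hlt)⟩]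
            · intro c _ hc
              rw [if_neg]
              rintro ⟨h, -⟩
              rw [VDup.mid.injEq] at h
              exact hc h.1
            · simp
          have e2 : (∑ c : I, if (VDup.mid a 0 : VDup P) = .mid c 0 ∧
              (VDup.mid c 1 : VDup P) < .mid b 1 then (1 : ℝ) else 0) = 1 := by
            rw [Finset.sum_eq_single a]
            · rw [if_pos ⟨rfl, mid_lt_mid_iff.mpr (Or.inr hlt)⟩]
            · intro c _ hc
              rw [if_neg]
              rintro ⟨h, -⟩
              rw [VDup.mid.injEq] at h
              exact hc h.1.symm
            · simp
          rw [e1, e2, eps_mid_zero hP, eps_mid_one hP]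
          norm_num
        · have hab' : a = b := by
            rcases hab with ⟨h, -⟩ | h
            · exact h
            · exact absurd h hlt
          subst hab'
          have e1 : (∑ c : I, if (VDup.mid c 1 : VDup P) = .mid a 1 ∧
              (VDup.mid a 0 : VDup P) < .mid c 0 then (-1 : ℝ) else 0) = 0 :=
            Finset.sum_eq_zero fun c _ => by
              rw [if_neg]
              rintro ⟨h1, h2⟩
              rw [VDup.mid.injEq] at h1
              rcases mid_lt_mid_iff.mp h2 with ⟨rfl, h⟩ | h
              · exact absurd h (by omega)
              · rw [h1.1] at h
                exact absurd h (lt_irrefl _)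
          have e2 : (∑ c : I, if (VDup.mid a 0 : VDup P) = .mid c 0 ∧
              (VDup.mid c 1 : VDup P) < .mid a 1 then (1 : ℝ) else 0) = 0 :=
            Finset.sum_eq_zero fun c _ => by
              rw [if_neg]
              rintro ⟨h1, h2⟩
              rw [VDup.mid.injEq] at h1
              rcases mid_lt_mid_iff.mp h2 with ⟨rfl, h⟩ | h
              · exact absurd h (by omega)
              · rw [← h1.1] at h
                exact absurd h (lt_irrefl _)
          rw [e1, e2, eps_mid_zero hP, eps_mid_one hP]
          norm_num
      · -- i = 1, j = 0
        have e1 : (∑ c : I, if (VDup.mid c 1 : VDup P) = .mid b 0 ∧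
            (VDup.mid a 1 : VDup P) < .mid c 0 then (-1 : ℝ) else 0) = 0 :=
          Finset.sum_eq_zero fun c _ => by
            rw [if_neg]; rintro ⟨h, -⟩; rw [VDup.mid.injEq] at h; exact absurd h.2 (by decide)
        have e2 : (∑ c : I, if (VDup.mid a 1 : VDup P) = .mid c 0 ∧
            (VDup.mid c 1 : VDup P) < .mid b 0 then (1 : ℝ) else 0) = 0 :=
          Finset.sum_eq_zero fun c _ => by
            rw [if_neg]; rintro ⟨h, -⟩; rw [VDup.mid.injEq] at h; exact absurd h.2 (by decide)
        rw [e1, e2, eps_mid_one hP, eps_mid_zero hP]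
        norm_num
      · -- i = 1, j = 1
        have hlt : (a : P) < (b : P) := by
          rcases hab with ⟨-, h⟩ | h
          · exact absurd h (by omega)
          · exact h
        have e1 : (∑ c : I, if (VDup.mid c 1 : VDup P) = .mid b 1 ∧
            (VDup.mid a 1 : VDup P) < .mid c 0 then (-1 : ℝ) else 0) = -1 := by
          rw [Finset.sum_eq_single b]
          · rw [if_pos ⟨rfl, mid_lt_mid_iff.mpr (Or.inr hlt)⟩]
          · intro c _ hc
            rw [if_neg]
            rintro ⟨h, -⟩
            rw [VDup.mid.injEq] at h
            exact hc h.1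
          · simp
        have e2 : (∑ c : I, if (VDup.mid a 1 : VDup P) = .mid c 0 ∧
            (VDup.mid c 1 : VDup P) < .mid b 1 then (1 : ℝ) else 0) = 0 :=
          Finset.sum_eq_zero fun c _ => by
            rw [if_neg]; rintro ⟨h, -⟩; rw [VDup.mid.injEq] at h; exact absurd h.2 (by decide)
        rw [e1, e2, eps_mid_one hP, eps_mid_one hP]
        norm_num

lemma sumT (hP : IsGraded P ρ n) {x y : VDup P} (hxy : x < y) :
    ∑ z ∈ Finset.univ.filter (fun z : VDup P => x < z ∧ z < y), (-1 : ℝ) ^ (VDup.rank ρ n z)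
    = (-(-1 : ℝ) ^ (VDup.rank ρ n x) - (-1 : ℝ) ^ (VDup.rank ρ n y)) / 2 := by
  have hset : Finset.univ.filter (fun z : VDup P => x < z ∧ z < y) =
      (Finset.univ.filter (fun p : I × Fin 2 =>
        x < VDup.mid p.1 p.2 ∧ (VDup.mid p.1 p.2 : VDup P) < y)).image
        (fun p => VDup.mid p.1 p.2) := by
    ext z
    simp only [Finset.mem_filter, Finset.mem_univ, true_and, Finset.mem_image]
    cases z with
    | bot =>
      constructor
      · rintro ⟨h, -⟩
        exact absurd h (not_lt_bot _)
      · rintro ⟨p, -, h⟩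
        exact absurd h (by simp)
    | top =>
      constructor
      · rintro ⟨-, h⟩
        exact absurd h (not_top_lt _)
      · rintro ⟨p, -, h⟩
        exact absurd h (by simp)
    | mid c l =>
      constructor
      · rintro ⟨h1, h2⟩
        exact ⟨(c, l), ⟨h1, h2⟩, rfl⟩
      · rintro ⟨p, hp, h⟩
        rw [VDup.mid.injEq] at h
        obtain ⟨rfl, rfl⟩ := h
        exact hp
  rw [hset, Finset.sum_image (by
    rintro ⟨a, i⟩ - ⟨b, j⟩ - h
    rw [VDup.mid.injEq] at h
    obtain ⟨rfl, rfl⟩ := h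
    rfl)]
  rw [Finset.sum_filter, Fintype.sum_prod_type]
  simp only [Fin.sum_univ_two]
  have key : ∀ c : I,
      ((if x < (VDup.mid c 0 : VDup P) ∧ (VDup.mid c 0 : VDup P) < y then
          (-1 : ℝ) ^ (VDup.rank ρ n (.mid c 0)) else 0) +
        if x < (VDup.mid c 1 : VDup P) ∧ (VDup.mid c 1 : VDup P) < y then
          (-1 : ℝ) ^ (VDup.rank ρ n (.mid c 1)) else 0) =
      (if (VDup.mid c 1 : VDup P) = y ∧ x < .mid c 0 then (-1 : ℝ) else 0) +
        if x = (VDup.mid c 0 : VDup P) ∧ (VDup.mid c 1 : VDup P) < y then (1 : ℝ) else 0 := by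
    intro c
    rw [eps_mid_zero hP, eps_mid_one hP]
    have hA : x < (VDup.mid c 1 : VDup P) ↔ x < .mid c 0 ∨ x = .mid c 0 := by
      rw [lt_mid_one_iff, le_iff_lt_or_eq]
    have hB : (VDup.mid c 0 : VDup P) < y ↔ (VDup.mid c 1 : VDup P) < y ∨
        (VDup.mid c 1 : VDup P) = y := by
      rw [mid_zero_lt_iff, le_iff_lt_or_eq]
    have h01 : (VDup.mid c 0 : VDup P) < .mid c 1 :=
      mid_lt_mid_iff.mpr (Or.inl ⟨rfl, by omega⟩)
    by_cases h1 : x < (VDup.mid c 0 : VDup P) <;>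
      by_cases h2 : (VDup.mid c 1 : VDup P) < y <;>
      by_cases h3 : x = (VDup.mid c 0 : VDup P) <;>
      by_cases h4 : (VDup.mid c 1 : VDup P) = y
    all_goals (try (exact absurd (h3 ▸ h1) (lt_irrefl _)))
    all_goals (try (exact absurd (h4 ▸ h2) (lt_irrefl _)))
    all_goals simp [hA, hB, h1, h2, h3, h4, h01]
  rw [Finset.sum_congr rfl (fun c _ => key c), Finset.sum_add_distrib]
  exact sumAB hP hxy

lemma muk_eq (hP : IsGraded P ρ n) :
    ∀ m : ℕ, ∀ y x : VDup P, (Finset.univ.filter (fun w : VDup P => w < y)).card ≤ m →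
      x ≤ y → muk (1/2 : ℝ) x y =
        (-1 : ℝ) ^ (VDup.rank ρ n y - VDup.rank ρ n x) := by
  intro m
  induction m with
  | zero =>
    intro y x hcard hxy
    rcases eq_or_lt_of_le hxy with rfl | hlt
    · rw [muk]
      simp
    · exfalso
      have : x ∈ Finset.univ.filter (fun w : VDup P => w < y) := by
        simp [hlt]
      have := Finset.card_pos.mpr ⟨x, this⟩
      omega
  | succ m ih =>
    intro y x hcard hxy
    rcases eq_or_lt_of_le hxy with rfl | hlt
    · rw [muk]
      simp
    · rw [muk, if_neg hlt.ne]
      have hs : ∀ z ∈ Finset.univ.filter (fun z : VDup P => x < z ∧ z < y),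
          muk (1/2 : ℝ) x z = (-1 : ℝ) ^ (VDup.rank ρ n z) * (-1 : ℝ) ^ (VDup.rank ρ n x) := by
        intro z hz
        obtain ⟨hxz, hzy⟩ := (Finset.mem_filter.mp hz).2
        rw [← neg_one_pow_sub' (rank_strictMono hP hxz).le]
        apply ih
        · have hsub : Finset.univ.filter (fun w : VDup P => w < z) ⊂
              Finset.univ.filter (fun w : VDup P => w < y) := by
            rw [Finset.ssubset_iff_of_subset]
            · exact ⟨z, Finset.mem_filter.mpr ⟨Finset.mem_univ _, hzy⟩,
                fun hc => absurd (Finset.mem_filter.mp hc).2 (lt_irrefl _)⟩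
            · intro w hw
              exact Finset.mem_filter.mpr ⟨Finset.mem_univ _,
                (Finset.mem_filter.mp hw).2.trans hzy⟩
          have := Finset.card_lt_card hsub
          omega
        · exact hxz.le
      have hsum : ∑ z ∈ (Finset.univ.filter (fun z : VDup P => x < z ∧ z < y)).attach,
          muk (1/2 : ℝ) x z.val =
          (-(-1 : ℝ) ^ (VDup.rank ρ n x) - (-1 : ℝ) ^ (VDup.rank ρ n y)) / 2 *
            (-1 : ℝ) ^ (VDup.rank ρ n x) := by
        rw [Finset.sum_attach _ (fun z => muk (1/2 : ℝ) x z),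
          Finset.sum_congr rfl hs, ← Finset.sum_mul, sumT hP hlt]
      rw [hsum, neg_one_pow_sub' (rank_strictMono hP hlt).le]
      have h2 : (-1 : ℝ) ^ (VDup.rank ρ n x) * (-1 : ℝ) ^ (VDup.rank ρ n x) = 1 := by
        rw [← pow_add, ← two_mul, pow_mul]
        norm_num
      linear_combination h2

end VDup


/-- the vertical doubling of a graded poset of rank `n+1` is a
half-Eulerian graded poset of rank `2n+1`. -/
theorem vdup_isHalfEulerian {P : Type} [PartialOrder P] [BoundedOrder P] [Finite P]
    (n : ℕ) (ρ : P → ℕ) (hP : IsGraded P ρ n) :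
    IsGraded (VDup P) (VDup.rank ρ n) (2 * n) ∧
    IsKEulerian (VDup P) (VDup.rank ρ n) (1/2) := by
  have hbotP : (⊥ : P) < ⊤ := by
    have h0 := hP.1
    have h1 := hP.2.1
    refine lt_of_le_of_ne le_top fun h => ?_
    rw [h] at h0
    omega
  constructor
  · refine ⟨rfl, rfl, ?_⟩
    intro a b hab
    obtain ⟨hlt, hnb⟩ := hab
    cases a with
    | top => exact absurd hlt (VDup.not_top_lt _)
    | bot =>
      cases b with
      | bot => exact absurd hlt (lt_irrefl _)
      | top =>
        have hcov : (⊥ : P) ⋖ ⊤ := by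
          refine ⟨hbotP, fun z h1 h2 => ?_⟩
          exact hnb (VDup.bot_lt_mid ⟨z, h1.ne', h2.ne⟩ 0) (VDup.mid_lt_top _ _)
        have := hP.2.2 _ _ hcov
        have h0 := hP.1
        have h1 := hP.2.1
        show 2 * n + 1 = 0 + 1
        omega
      | mid x i =>
        have hx := VDup.interior_rho hP x
        have hi : i = 0 := by
          have : i = 0 ∨ i = 1 := by omega
          rcases this with rfl | rfl
          · rfl
          · exact absurd (hnb (VDup.bot_lt_mid x 0)
              (VDup.mid_lt_mid_iff.mpr (Or.inl ⟨rfl, by decide⟩) :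
                (VDup.mid x 0 : VDup P) < .mid x 1)) not_false
        subst hi
        have hρ : ρ (x : P) = 1 := by
          by_contra h
          have h2 : 2 ≤ ρ (x : P) := by omega
          have hbx : (⊥ : P) < x := lt_of_le_of_ne bot_le (Ne.symm x.2.1)
          obtain ⟨c, -, hc⟩ := exists_le_cov hbx
          have hρc := hP.2.2 _ _ hc
          have hc0 : c ≠ ⊥ := by
            intro h'
            rw [h'] at hρc
            have := hP.1
            omega
          have hcT : c ≠ ⊤ :=
            ne_top_of_lt (hc.lt.trans (lt_of_le_of_ne le_top x.2.2))
          exact hnb (VDup.bot_lt_mid ⟨c, hc0, hcT⟩ 0)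
            (VDup.mid_lt_mid_iff.mpr (Or.inr hc.lt))
        show 2 * ρ (x : P) - 1 + (0 : Fin 2).val = 0 + 1
        rw [hρ]
        decide
    | mid x i =>
      cases b with
      | bot => exact absurd hlt (VDup.not_lt_bot _)
      | top =>
        have hx := VDup.interior_rho hP x
        have hi : i = 1 := by
          have : i = 0 ∨ i = 1 := by omega
          rcases this with rfl | rfl
          · exact absurd (hnb (VDup.mid_lt_mid_iff.mpr (Or.inl ⟨rfl, by decide⟩) :
                (VDup.mid x 0 : VDup P) < .mid x 1)
              (VDup.mid_lt_top x 1)) not_false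
          · rfl
        subst hi
        have hρ : ρ (x : P) = n := by
          by_contra h
          have h2 : ρ (x : P) + 1 ≤ n := by omega
          have hxT : (x : P) < ⊤ := lt_of_le_of_ne le_top x.2.2
          obtain ⟨c, hc, -⟩ := exists_cov_le hxT
          have hρc := hP.2.2 _ _ hc
          have hcT : c ≠ ⊤ := by
            intro h'
            rw [h'] at hρc
            have := hP.2.1
            omega
          have hc0 : c ≠ ⊥ :=
            ne_bot_of_gt (lt_of_lt_of_le (lt_of_le_of_ne bot_le (Ne.symm x.2.1)) hc.lt.le)
          exact hnb (VDup.mid_lt_mid_iff.mpr (Or.inr hc.lt) :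
              (VDup.mid x 1 : VDup P) < .mid ⟨c, hc0, hcT⟩ 1)
            (VDup.mid_lt_top _ _)
        show 2 * n + 1 = 2 * ρ (x : P) - 1 + (1 : Fin 2).val + 1
        rw [hρ]
        have : 1 ≤ n := by omega
        omega
      | mid y j =>
        have hx := VDup.interior_rho hP x
        have hy := VDup.interior_rho hP y
        rcases VDup.mid_lt_mid_iff.mp hlt with ⟨rfl, hij⟩ | hxy
        · have : i = 0 ∧ j = 1 := by
            constructor <;> omega
          obtain ⟨rfl, rfl⟩ := this
          show 2 * ρ (x : P) - 1 + (1 : Fin 2).val = 2 * ρ (x : P) - 1 + (0 : Fin 2).val + 1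
          omega
        · have hi : i = 1 := by
            have : i = 0 ∨ i = 1 := by omega
            rcases this with rfl | rfl
            · exact absurd (hnb (VDup.mid_lt_mid_iff.mpr (Or.inl ⟨rfl, by decide⟩) :
                  (VDup.mid x 0 : VDup P) < .mid x 1)
                (VDup.mid_lt_mid_iff.mpr (Or.inr hxy))) not_false
            · rfl
          have hj : j = 0 := by
            have : j = 0 ∨ j = 1 := by omega
            rcases this with rfl | rfl
            · rfl
            · exact absurd (hnb (VDup.mid_lt_mid_iff.mpr (Or.inr hxy) :
                  (VDup.mid x i : VDup P) < .mid y 0)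
                (VDup.mid_lt_mid_iff.mpr (Or.inl ⟨rfl, by decide⟩) :
                  (VDup.mid y 0 : VDup P) < .mid y 1)) not_false
          subst hi; subst hj
          have hcov : (x : P) ⋖ (y : P) := by
            refine ⟨hxy, fun z h1 h2 => ?_⟩
            have hz0 : z ≠ ⊥ :=
              ne_bot_of_gt (lt_of_lt_of_le (lt_of_le_of_ne bot_le (Ne.symm x.2.1)) h1.le)
            have hzT : z ≠ ⊤ := ne_top_of_lt (h2.trans (lt_of_le_of_ne le_top y.2.2))
            exact hnb (VDup.mid_lt_mid_iff.mpr (Or.inr h1) :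
                (VDup.mid x 1 : VDup P) < .mid ⟨z, hz0, hzT⟩ 1)
              (VDup.mid_lt_mid_iff.mpr (Or.inr h2))
          have := hP.2.2 _ _ hcov
          show 2 * ρ (y : P) - 1 + (0 : Fin 2).val = 2 * ρ (x : P) - 1 + (1 : Fin 2).val + 1
          omega
  · intro x y hxy
    exact VDup.muk_eq hP (Finset.univ.filter (fun w : VDup P => w < y)).card y x le_rfl hxy
end
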